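/- Let a < b, let s ∈ (0,1), let g : [a,b] → [0,∞) be an s-convex (in the second sense) Lebesgue integrable function, and let f : [a,b] → [0,∞) be a Lebesgue integrable (g,s)-convex dominated function. Then |(f(a) + f(b))/(s+1) − (1/(b−a)) ∫_a^b f(x) dx| ≤ (g(a) + g(b))/(s+1) − (1/(b−a)) ∫_a^b g(x) dx. -/

import Mathlib

/-!
Substituting `x = t a + (1 - t) b` turns both sides into integrals over `[0, 1]` of the
`s`-convexity defect `t ^ s h(a) + (1 - t) ^ s h(b) - h(t a + (1 - t) b)`, of `h = f` and of
`h = g`, since `∫₀¹ t ^ s = ∫₀¹ (1 - t) ^ s = 1 / (s + 1)`. Domination bounds the defect of `f` in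
absolute value by that of `g` on `(0, 1)`, and integrating this bound gives the inequality.
-/

open MeasureTheory Set intervalIntegral

lemma integral_rpow_zero_one {s : ℝ} (hs : -1 < s) : ∫ t in (0:ℝ)..1, t ^ s = 1 / (s + 1) := by
  rw [integral_rpow (Or.inl hs), Real.one_rpow, Real.zero_rpow (by linarith)]
  ring

lemma integral_one_sub_rpow_zero_one {s : ℝ} (hs : -1 < s) :
    ∫ t in (0:ℝ)..1, (1 - t) ^ s = 1 / (s + 1) := by
  simpa [integral_rpow_zero_one hs] using
    integral_comp_sub_left (fun x : ℝ => x ^ s) 1 (a := 0) (b := 1)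

lemma intervalIntegrable_one_sub_rpow {s : ℝ} (hs : -1 < s) :
    IntervalIntegrable (fun t : ℝ => (1 - t) ^ s) volume 0 1 := by
  simpa using ((intervalIntegrable_rpow' hs (a := 0) (b := 1)).comp_sub_left 1).symm

section Substitution

variable {E : Type*} [NormedAddCommGroup E] {h : ℝ → E} {a b : ℝ}

lemma IntervalIntegrable.comp_convexCombination (hab : a ≠ b)
    (hh : IntervalIntegrable h volume a b) :
    IntervalIntegrable (fun t => h (t * a + (1 - t) * b)) volume 0 1 := by
  have hne : a - b ≠ 0 := sub_ne_zero.mpr hab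
  have := ((hh.comp_add_right b).comp_mul_left (c := a - b)).symm
  simp only [sub_self, zero_div, div_self hne] at this
  convert this using 2
  ring_nf

lemma integral_comp_convexCombination [NormedSpace ℝ E] (hab : a ≠ b) :
    ∫ t in (0:ℝ)..1, h (t * a + (1 - t) * b) = (b - a)⁻¹ • ∫ x in a..b, h x := by
  have hne : a - b ≠ 0 := sub_ne_zero.mpr hab
  have hsub : (fun t => h (t * a + (1 - t) * b)) = fun t => h ((a - b) * t + b) := by
    funext t; ring_nf
  rw [hsub, integral_comp_mul_add h hne b, mul_zero, zero_add, mul_one, sub_add_cancel,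
    integral_symm, smul_neg, ← neg_smul, ← inv_neg, neg_sub]

end Substitution

noncomputable def sConvexDefect (s : ℝ) (h : ℝ → ℝ) (a b t : ℝ) : ℝ :=
  t ^ s * h a + (1 - t) ^ s * h b - h (t * a + (1 - t) * b)

section Defect

variable {s a b : ℝ} {h : ℝ → ℝ}

lemma intervalIntegrable_sConvexDefect (hab : a ≠ b) (hs : -1 < s)
    (hh : IntervalIntegrable h volume a b) :
    IntervalIntegrable (sConvexDefect s h a b) volume 0 1 :=
  (((intervalIntegrable_rpow' hs).mul_const (h a)).add
    ((intervalIntegrable_one_sub_rpow hs).mul_const (h b))).sub (hh.comp_convexCombination hab)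

lemma integral_sConvexDefect (hab : a ≠ b) (hs : -1 < s) (hh : IntervalIntegrable h volume a b) :
    ∫ t in (0:ℝ)..1, sConvexDefect s h a b t =
      (h a + h b) / (s + 1) - (1 / (b - a)) * ∫ x in a..b, h x := by
  have hpow := (intervalIntegrable_rpow' hs (a := 0) (b := 1)).mul_const (h a)
  have hpow' := (intervalIntegrable_one_sub_rpow hs).mul_const (h b)
  unfold sConvexDefect
  rw [integral_sub (hpow.add hpow') (hh.comp_convexCombination hab), integral_add hpow hpow',
    intervalIntegral.integral_mul_const, intervalIntegral.integral_mul_const, integral_rpow_zero_one hs,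
    integral_one_sub_rpow_zero_one hs, integral_comp_convexCombination hab, smul_eq_mul]
  ring

end Defect

theorem stmt14_general (a b : ℝ) (hab : a < b) (s : ℝ) (hs : s ∈ Set.Ioo (0:ℝ) 1)
    (f g : ℝ → ℝ)
    (hgint : IntegrableOn g (Set.Icc a b))
    (hfint : IntegrableOn f (Set.Icc a b))
    (hfdom : ∀ x ∈ Set.Icc a b, ∀ y ∈ Set.Icc a b, ∀ t ∈ Set.Ioo (0:ℝ) 1,
      |t ^ s * f x + (1 - t) ^ s * f y - f (t * x + (1 - t) * y)| ≤
        t ^ s * g x + (1 - t) ^ s * g y - g (t * x + (1 - t) * y)) :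
    |(f a + f b) / (s + 1) - (1 / (b - a)) * ∫ x in a..b, f x| ≤
      (g a + g b) / (s + 1) - (1 / (b - a)) * ∫ x in a..b, g x := by
  have hs' : -1 < s := by linarith [hs.1]
  have hf := (intervalIntegrable_iff_integrableOn_Icc_of_le hab.le).mpr hfint
  have hg := (intervalIntegrable_iff_integrableOn_Icc_of_le hab.le).mpr hgint
  have ha : a ∈ Icc a b := left_mem_Icc.mpr hab.le
  have hb : b ∈ Icc a b := right_mem_Icc.mpr hab.le
  rw [← integral_sConvexDefect hab.ne hs' hf, ← integral_sConvexDefect hab.ne hs' hg]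
  calc |∫ t in (0:ℝ)..1, sConvexDefect s f a b t|
      ≤ ∫ t in (0:ℝ)..1, |sConvexDefect s f a b t| := abs_integral_le_integral_abs zero_le_one
    _ ≤ ∫ t in (0:ℝ)..1, sConvexDefect s g a b t :=
      integral_mono_on_of_le_Ioo zero_le_one
        (intervalIntegrable_sConvexDefect hab.ne hs' hf).abs
        (intervalIntegrable_sConvexDefect hab.ne hs' hg) (hfdom a ha b hb)

theorem stmt14 (a b : ℝ) (hab : a < b) (s : ℝ) (hs : s ∈ Set.Ioo (0:ℝ) 1)
    (f g : ℝ → ℝ)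
    (hg0 : ∀ x ∈ Set.Icc a b, 0 ≤ g x)
    (hgconv : ∀ x ∈ Set.Icc a b, ∀ y ∈ Set.Icc a b, ∀ t ∈ Set.Ioo (0:ℝ) 1,
      g (t * x + (1 - t) * y) ≤ t ^ s * g x + (1 - t) ^ s * g y)
    (hgint : IntegrableOn g (Set.Icc a b))
    (hf0 : ∀ x ∈ Set.Icc a b, 0 ≤ f x)
    (hfint : IntegrableOn f (Set.Icc a b))
    (hfdom : ∀ x ∈ Set.Icc a b, ∀ y ∈ Set.Icc a b, ∀ t ∈ Set.Ioo (0:ℝ) 1,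
      |t ^ s * f x + (1 - t) ^ s * f y - f (t * x + (1 - t) * y)| ≤
        t ^ s * g x + (1 - t) ^ s * g y - g (t * x + (1 - t) * y)) :
    |(f a + f b) / (s + 1) - (1 / (b - a)) * ∫ x in a..b, f x| ≤
      (g a + g b) / (s + 1) - (1 / (b - a)) * ∫ x in a..b, g x :=
  stmt14_general a b hab s hs f g hgint hfint hfdom
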